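/- Let {S_t} and {T_t} be C0-semigroups on a real Hilbert space G with T_t* S_t = I. Let c_{a,b} = S_a c_{b-a} and d_{a,b} = T_a d_{b-a} for a real additive cocycle {c_t} and imaginary additive cocycle {d_t}. Then for any finite intervals (s_1,s_2), (t_1,t_2) ⊂ (0,∞), ⟨c_{s_1,s_2}, d_{t_1,t_2}⟩ = ⟨c_1, d_1⟩ · |(s_1,s_2) ∩ (t_1,t_2)|, where |·| denotes Lebesgue measure. -/

import Mathlib

/-!
The diagonal pairing `r ↦ ⟪c r, d r⟫` is additive on `(0, ∞)`: expanding both cocycle identities,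
the cross terms vanish because `c_s ∈ ker T_s*` and `d_s ∈ ker S_s*`, while `⟪S_s u, T_s v⟫ = ⟪u, v⟫`.
On `(0, 1)` it agrees with the measurable function `r ↦ ⟪c r, d 1⟫`, so by the measurable Cauchy
equation it equals `r ↦ ⟪c 1, d 1⟫ r`. The same orthogonality makes increments over disjoint
intervals orthogonal, so splitting both increments at the endpoints of the overlap leaves only the
diagonal pairing over the overlap.
-/

open ContinuousLinearMap Set MeasureTheory
open scoped RealInnerProductSpace

lemma exists_addMonoidHom_eqOn_Ioi {φ : ℝ → ℝ}
    (hφ : ∀ s t, 0 < s → 0 < t → φ (s + t) = φ s + φ t) :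
    ∃ F : ℝ →+ ℝ, EqOn F φ (Ioi 0) := by
  -- `φ (t + a) - φ a` does not depend on the shift `a`, as long as both arguments are positive.
  have shift : ∀ t a b, 0 < a → 0 < b → 0 < t + a → 0 < t + b →
      φ (t + a) - φ a = φ (t + b) - φ b := by
    intro t a b ha hb hta htb
    have h₁ := hφ (t + a) b hta hb
    have h₂ := hφ (t + b) a htb ha
    rw [show t + b + a = t + a + b by ring] at h₂
    linarith
  let F : ℝ → ℝ := fun t => φ (t + (|t| + 1)) - φ (|t| + 1)
  have hF : ∀ t a, 0 < a → 0 < t + a → F t = φ (t + a) - φ a := fun t a ha hta =>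
    shift t _ a (by positivity) ha (by linarith [neg_abs_le t]) hta
  refine ⟨AddMonoidHom.mk' F fun s t => ?_, fun t ht => ?_⟩
  · have hs : 0 < s + (|s| + 1) := by linarith [neg_abs_le s]
    have ht : 0 < t + (|t| + 1) := by linarith [neg_abs_le t]
    rw [hF (s + t) (|s| + 1 + (|t| + 1)) (by positivity) (by linarith),
      show s + t + (|s| + 1 + (|t| + 1)) = s + (|s| + 1) + (t + (|t| + 1)) by ring,
      hφ _ _ hs ht, hφ (|s| + 1) (|t| + 1) (by positivity) (by positivity)]
    ring
  · change F t = φ t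
    rw [hF t 1 one_pos (by linarith [mem_Ioi.1 ht]), hφ t 1 ht one_pos]
    ring

lemma AddMonoidHom.measurable_of_eqOn_Ioo (F : ℝ →+ ℝ) {g : ℝ → ℝ} (hg : Measurable g)
    (hFg : EqOn F g (Ioo 0 1)) : Measurable F := by
  have hF : ⇑F = fun t => (Ioo 0 1).indicator g (Int.fract t) + ⌊t⌋ * F 1 := by
    funext t
    have hfract : F (Int.fract t) = (Ioo 0 1).indicator g (Int.fract t) := by
      rcases (Int.fract_nonneg t).eq_or_lt with h | h
      · simp [← h]
      · have hmem : Int.fract t ∈ Ioo (0 : ℝ) 1 := ⟨h, Int.fract_lt_one t⟩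
        rw [indicator_of_mem hmem, hFg hmem]
    have hfloor : F ⌊t⌋ = ⌊t⌋ * F 1 := by simpa using map_zsmul F ⌊t⌋ (1 : ℝ)
    conv_lhs => rw [← Int.floor_add_fract t]
    rw [map_add, hfract, hfloor, add_comm]
  rw [hF]
  exact ((hg.indicator measurableSet_Ioo).comp measurable_fract).add
    ((Measurable.of_discrete.comp Int.measurable_floor).mul_const _)

lemma eq_mul_of_add_of_eqOn_measurable {φ g : ℝ → ℝ}
    (hφ : ∀ s t, 0 < s → 0 < t → φ (s + t) = φ s + φ t)
    (hg : Measurable g) (hφg : EqOn φ g (Ioo 0 1)) {t : ℝ} (ht : 0 < t) :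
    φ t = φ 1 * t := by
  obtain ⟨F, hF⟩ := exists_addMonoidHom_eqOn_Ioi hφ
  have hFg : EqOn F g (Ioo 0 1) := fun x hx => (hF (Ioo_subset_Ioi_self hx)).trans (hφg hx)
  have hcont := Measure.AddMonoidHom.continuous_of_measurable F (F.measurable_of_eqOn_Ioo hg hFg)
  rw [← hF ht, ← hF (mem_Ioi.2 one_pos), mul_comm, ← smul_eq_mul, ← map_real_smul F hcont,
    smul_eq_mul, mul_one]

section Increment

variable {E : Type*} [TopologicalSpace E] [AddCommGroup E] [Module ℝ E]

def cocycleIncrement (S : ℝ → E →L[ℝ] E) (c : ℝ → E) (a b : ℝ) : E := S a (c (b - a))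

lemma eq_comp_sub_of_add {S : ℝ → E →L[ℝ] E}
    (hS : ∀ s t, 0 ≤ s → 0 ≤ t → S (s + t) = S s ∘L S t) {a b : ℝ} (ha : 0 ≤ a) (hab : a ≤ b) :
    S b = S a ∘L S (b - a) := by
  simpa using hS a (b - a) ha (sub_nonneg.2 hab)

lemma cocycleIncrement_add_cocycleIncrement {S : ℝ → E →L[ℝ] E} {c : ℝ → E}
    (hS : ∀ s t, 0 ≤ s → 0 ≤ t → S (s + t) = S s ∘L S t)
    (hc : ∀ s t, 0 < s → 0 < t → c (s + t) = c s + S s (c t))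
    {a m b : ℝ} (ha : 0 ≤ a) (ham : a < m) (hmb : m < b) :
    cocycleIncrement S c a m + cocycleIncrement S c m b = cocycleIncrement S c a b := by
  have hc' := hc (m - a) (b - m) (sub_pos.2 ham) (sub_pos.2 hmb)
  rw [sub_add_sub_cancel'] at hc'
  simp only [cocycleIncrement, hc', map_add, eq_comp_sub_of_add hS ha ham.le, coe_comp,
    Function.comp_apply]

end Increment

section CocyclePair

variable {G : Type*} [NormedAddCommGroup G] [InnerProductSpace ℝ G] [CompleteSpace G]

structure IsCocyclePair (S T : ℝ → G →L[ℝ] G) (c d : ℝ → G) : Prop where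
  S_add : ∀ s t, 0 ≤ s → 0 ≤ t → S (s + t) = S s ∘L S t
  T_add : ∀ s t, 0 ≤ s → 0 ≤ t → T (s + t) = T s ∘L T t
  adjoint_comp : ∀ t, 0 ≤ t → adjoint (T t) ∘L S t = 1
  adjoint_c : ∀ t, 0 < t → adjoint (T t) (c t) = 0
  adjoint_d : ∀ t, 0 < t → adjoint (S t) (d t) = 0
  c_add : ∀ s t, 0 < s → 0 < t → c (s + t) = c s + S s (c t)
  d_add : ∀ s t, 0 < s → 0 < t → d (s + t) = d s + T s (d t)

namespace IsCocyclePair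

variable {S T : ℝ → G →L[ℝ] G} {c d : ℝ → G} (h : IsCocyclePair S T c d)
include h

lemma adjoint_apply_apply {t : ℝ} (ht : 0 ≤ t) (u : G) : adjoint (T t) (S t u) = u := by
  simpa using congr($(h.adjoint_comp t ht) u)

lemma symm : IsCocyclePair T S d c where
  S_add := h.T_add
  T_add := h.S_add
  adjoint_comp t ht := by
    simpa [adjoint_comp, adjoint_one] using congrArg adjoint (h.adjoint_comp t ht)
  adjoint_c := h.adjoint_d
  adjoint_d := h.adjoint_c
  c_add := h.d_add
  d_add := h.c_add

lemma inner_apply_apply {t : ℝ} (ht : 0 ≤ t) (u v : G) : ⟪S t u, T t v⟫ = ⟪u, v⟫ := by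
  rw [← adjoint_inner_left, h.adjoint_apply_apply ht]

lemma inner_c_apply {t : ℝ} (ht : 0 < t) (v : G) : ⟪c t, T t v⟫ = 0 := by
  rw [← adjoint_inner_left, h.adjoint_c t ht, inner_zero_left]

lemma inner_cocycleIncrement_eq_zero {a b x y : ℝ} (ha : 0 ≤ a) (hab : a < b) (hbx : b ≤ x) :
    ⟪cocycleIncrement S c a b, cocycleIncrement T d x y⟫ = 0 := by
  rw [cocycleIncrement, cocycleIncrement, eq_comp_sub_of_add h.T_add ha (hab.le.trans hbx),
    coe_comp, Function.comp_apply, h.inner_apply_apply ha,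
    eq_comp_sub_of_add h.T_add (sub_nonneg.2 hab.le) (sub_le_sub_right hbx a), coe_comp,
    Function.comp_apply, h.inner_c_apply (sub_pos.2 hab)]

lemma inner_diag_add {s t : ℝ} (hs : 0 < s) (ht : 0 < t) :
    ⟪c (s + t), d (s + t)⟫ = ⟪c s, d s⟫ + ⟪c t, d t⟫ := by
  have hcross : ⟪S s (c t), d s⟫ = 0 := by
    rw [real_inner_comm]
    exact h.symm.inner_c_apply hs _
  rw [h.c_add s t hs ht, h.d_add s t hs ht, inner_add_left, inner_add_right, inner_add_right,
    h.inner_c_apply hs, hcross, h.inner_apply_apply hs.le]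
  ring

lemma inner_diag_eq_inner {r t : ℝ} (hr : 0 < r) (hrt : r < t) : ⟪c r, d r⟫ = ⟪c r, d t⟫ := by
  have hd := h.d_add r (t - r) hr (sub_pos.2 hrt)
  rw [add_sub_cancel] at hd
  rw [hd, inner_add_right, h.inner_c_apply hr, add_zero]

lemma inner_diag_eq_mul (hc : ∀ x : G, Measurable fun t => ⟪c t, x⟫) {r : ℝ} (hr : 0 < r) :
    ⟪c r, d r⟫ = ⟪c 1, d 1⟫ * r :=
  eq_mul_of_add_of_eqOn_measurable (fun _ _ => h.inner_diag_add) (hc (d 1))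
    (fun _ hr => h.inner_diag_eq_inner hr.1 hr.2) hr

lemma inner_cocycleIncrement_trim_left {s₁ s₂ t₁ t₂ : ℝ} (hs₁ : 0 ≤ s₁) (hst : s₁ ≤ t₁)
    (ht₁ : t₁ < s₂) :
    ⟪cocycleIncrement S c s₁ s₂, cocycleIncrement T d t₁ t₂⟫ =
      ⟪cocycleIncrement S c t₁ s₂, cocycleIncrement T d t₁ t₂⟫ := by
  rcases hst.eq_or_lt with rfl | hst
  · rfl
  rw [← cocycleIncrement_add_cocycleIncrement h.S_add h.c_add hs₁ hst ht₁, inner_add_left,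
    h.inner_cocycleIncrement_eq_zero hs₁ hst le_rfl, zero_add]

lemma inner_cocycleIncrement_trim_right {p s t : ℝ} (hp : 0 ≤ p) (hps : p < s) (hst : s ≤ t) :
    ⟪cocycleIncrement S c p s, cocycleIncrement T d p t⟫ =
      ⟪cocycleIncrement S c p s, cocycleIncrement T d p s⟫ := by
  rcases hst.eq_or_lt with rfl | hst
  · rfl
  rw [← cocycleIncrement_add_cocycleIncrement h.T_add h.d_add hp hps hst, inner_add_right,
    h.inner_cocycleIncrement_eq_zero hp hps le_rfl, add_zero]

lemma inner_cocycleIncrement_same_left {κ : ℝ}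
    (hκ : ∀ r, 0 < r → ⟪c r, d r⟫ = κ * r) {p s t : ℝ} (hp : 0 ≤ p) (hps : p < s) (hpt : p < t) :
    ⟪cocycleIncrement S c p s, cocycleIncrement T d p t⟫ = κ * (min s t - p) := by
  wlog hst : s ≤ t generalizing S T c d s t
  · rw [real_inner_comm, min_comm]
    exact this h.symm (fun r hr => by rw [real_inner_comm, hκ r hr]) hpt hps (le_of_not_ge hst)
  rw [h.inner_cocycleIncrement_trim_right hp hps hst, cocycleIncrement, cocycleIncrement,
    h.inner_apply_apply hp, hκ _ (sub_pos.2 hps), min_eq_left hst]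

lemma inner_cocycleIncrement {κ : ℝ}
    (hκ : ∀ r, 0 < r → ⟪c r, d r⟫ = κ * r) {s₁ s₂ t₁ t₂ : ℝ} (hs₁ : 0 ≤ s₁) (hs : s₁ < s₂)
    (ht₁ : 0 ≤ t₁) (ht : t₁ < t₂) :
    ⟪cocycleIncrement S c s₁ s₂, cocycleIncrement T d t₁ t₂⟫ =
      κ * max (min s₂ t₂ - max s₁ t₁) 0 := by
  wlog hst : s₁ ≤ t₁ generalizing S T c d s₁ s₂ t₁ t₂
  · rw [real_inner_comm, min_comm, max_comm s₁]
    exact this h.symm (fun r hr => by rw [real_inner_comm, hκ r hr]) ht₁ ht hs₁ hs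
      (le_of_not_ge hst)
  rw [max_eq_right hst]
  rcases lt_or_ge t₁ s₂ with hts | hst'
  · rw [h.inner_cocycleIncrement_trim_left hs₁ hst hts,
      h.inner_cocycleIncrement_same_left hκ ht₁ hts ht,
      max_eq_left (sub_nonneg.2 (le_min hts.le ht.le))]
  · rw [h.inner_cocycleIncrement_eq_zero hs₁ hs hst', max_eq_right, mul_zero]
    linarith [min_le_left s₂ t₂]

end IsCocyclePair

end CocyclePair

theorem cocycle_pairing_intervals_general
    {G : Type*} [NormedAddCommGroup G] [InnerProductSpace ℝ G] [CompleteSpace G]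
    (S T : ℝ → G →L[ℝ] G)
    (hSadd : ∀ s t : ℝ, 0 ≤ s → 0 ≤ t → S (s + t) = S s ∘L S t)
    (hTadd : ∀ s t : ℝ, 0 ≤ s → 0 ≤ t → T (s + t) = T s ∘L T t)
    (hTS : ∀ t : ℝ, 0 ≤ t → (adjoint (T t)) ∘L S t = 1)
    (c d : ℝ → G)
    (hcker : ∀ t : ℝ, 0 < t → adjoint (T t) (c t) = 0)
    (hdker : ∀ t : ℝ, 0 < t → adjoint (S t) (d t) = 0)
    (hccoc : ∀ s t : ℝ, 0 < s → 0 < t → c (s + t) = c s + S s (c t))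
    (hdcoc : ∀ s t : ℝ, 0 < s → 0 < t → d (s + t) = d s + T s (d t))
    (hcmeas : ∀ x : G, Measurable fun t => (inner ℝ (c t) x : ℝ)) :
    ∀ s₁ s₂ t₁ t₂ : ℝ, 0 ≤ s₁ → s₁ < s₂ → 0 ≤ t₁ → t₁ < t₂ →
      (inner ℝ (S s₁ (c (s₂ - s₁))) (T t₁ (d (t₂ - t₁))) : ℝ) =
        (inner ℝ (c 1) (d 1) : ℝ) *
          (MeasureTheory.volume (Set.Ioo s₁ s₂ ∩ Set.Ioo t₁ t₂)).toReal := by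
  intro s₁ s₂ t₁ t₂ hs₁ hs ht₁ ht
  have h : IsCocyclePair S T c d := ⟨hSadd, hTadd, hTS, hcker, hdker, hccoc, hdcoc⟩
  rw [Set.Ioo_inter_Ioo, Real.volume_Ioo, ENNReal.toReal_ofReal']
  exact h.inner_cocycleIncrement (fun r hr => h.inner_diag_eq_mul hcmeas hr) hs₁ hs ht₁ ht

/-- With `(S_t)`, `(T_t)` C₀-semigroups on a real Hilbert space `G` satisfying
`T_t* S_t = I`, a real additive cocycle `(c_t)` and an imaginary additive cocycle `(d_t)`,
set `c_{a,b} = S_a c_{b-a}` and `d_{a,b} = T_a d_{b-a}`.  Then for finite intervals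
`(s₁,s₂), (t₁,t₂) ⊂ (0,∞)` one has
`⟨c_{s₁,s₂}, d_{t₁,t₂}⟩ = ⟨c_1, d_1⟩ · |(s₁,s₂) ∩ (t₁,t₂)|`. -/
theorem cocycle_pairing_intervals
    {G : Type*} [NormedAddCommGroup G] [InnerProductSpace ℝ G] [CompleteSpace G]
    (S T : ℝ → G →L[ℝ] G)
    (hS0 : S 0 = 1) (hT0 : T 0 = 1)
    (hSadd : ∀ s t : ℝ, 0 ≤ s → 0 ≤ t → S (s + t) = S s ∘L S t)
    (hTadd : ∀ s t : ℝ, 0 ≤ s → 0 ≤ t → T (s + t) = T s ∘L T t)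
    (hScont : ∀ x : G, ContinuousOn (fun t => S t x) (Set.Ici 0))
    (hTcont : ∀ x : G, ContinuousOn (fun t => T t x) (Set.Ici 0))
    (hTS : ∀ t : ℝ, 0 ≤ t → (adjoint (T t)) ∘L S t = 1)
    (c d : ℝ → G)
    (hcker : ∀ t : ℝ, 0 < t → adjoint (T t) (c t) = 0)
    (hdker : ∀ t : ℝ, 0 < t → adjoint (S t) (d t) = 0)
    (hccoc : ∀ s t : ℝ, 0 < s → 0 < t → c (s + t) = c s + S s (c t))
    (hdcoc : ∀ s t : ℝ, 0 < s → 0 < t → d (s + t) = d s + T s (d t))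
    (hcmeas : ∀ x : G, Measurable fun t => (inner ℝ (c t) x : ℝ))
    (hdmeas : ∀ x : G, Measurable fun t => (inner ℝ (d t) x : ℝ)) :
    ∀ s₁ s₂ t₁ t₂ : ℝ, 0 ≤ s₁ → s₁ < s₂ → 0 ≤ t₁ → t₁ < t₂ →
      (inner ℝ (S s₁ (c (s₂ - s₁))) (T t₁ (d (t₂ - t₁))) : ℝ) =
        (inner ℝ (c 1) (d 1) : ℝ) *
          (MeasureTheory.volume (Set.Ioo s₁ s₂ ∩ Set.Ioo t₁ t₂)).toReal :=
  cocycle_pairing_intervals_general S T hSadd hTadd hTS c d hcker hdker hccoc hdcoc hcmeas
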